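/- Let n ≥ 1, 1 ≤ k ≤ n, and let t, θ ∈ [0, π] satisfy |t − θ_k| > δ for some δ > π/(2n). Then |S_{k,n}(t)| ≤ (π³/(4n²))·(4n²/(2nδ − π)²); in particular, for fixed δ > 0 one has |S_{k,n}(t)| = O(1/n²) uniformly over such t. -/
import Mathlib


open Real MeasureTheory Set Filter

/-- Chebyshev angles `θ_k = (2k-1)π/(2n)`. -/
noncomputable def cheb (n k : ℕ) : ℝ := (2 * (k : ℝ) - 1) * π / (2 * n)

/-- Fundamental Lagrange polynomials at Chebyshev nodes, in the angular
variable, extended continuously through the removable singularities. -/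
noncomputable def P (n k : ℕ) (t : ℝ) : ℝ :=
  if Real.cos t = Real.cos (cheb n k) then
    (-1) ^ (k + 1) * Real.sin (n * t) * Real.sin (cheb n k) / Real.sin t
  else
    (-1) ^ (k + 1) * Real.cos (n * t) * Real.sin (cheb n k) /
      (n * (Real.cos t - Real.cos (cheb n k)))

/-- `S_{k,n}(t) = (P_k(t - π/(2n)) + P_k(t + π/(2n)))/2`. -/
noncomputable def S (n k : ℕ) (t : ℝ) : ℝ :=
  (P n k (t - π / (2 * n)) + P n k (t + π / (2 * n))) / 2

/-- The Grünwald–Durrmeyer operator. -/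
noncomputable def D (n : ℕ) (f : ℝ → ℝ) (θ : ℝ) : ℝ :=
  (n / π) * ∑ k ∈ Finset.Icc 1 n, S n k θ * ∫ t in (0:ℝ)..π, f t * S n k t

lemma abs_sin_lower (x c : ℝ) (hc : 0 ≤ c) (h1 : c ≤ |x|) (h2 : |x| ≤ π / 2) :
    2 / π * c ≤ |Real.sin x| := by
  have hπ := Real.pi_pos
  have j := Real.mul_le_sin (x := |x|) (abs_nonneg x) h2
  have he : |Real.sin x| = Real.sin |x| := by
    rcases le_or_gt 0 x with hx | hx
    · rw [abs_of_nonneg hx, abs_of_nonneg (Real.sin_nonneg_of_nonneg_of_le_pi hx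
        (by rw [abs_of_nonneg hx] at h2; linarith))]
    · have hxabs : |x| = -x := abs_of_neg hx
      have hs : Real.sin x ≤ 0 := by
        have : 0 ≤ Real.sin (-x) := Real.sin_nonneg_of_nonneg_of_le_pi (by linarith)
          (by rw [hxabs] at h2; linarith)
        rw [Real.sin_neg] at this; linarith
      rw [abs_of_nonpos hs, hxabs, Real.sin_neg]
  rw [he]
  calc 2 / π * c ≤ 2 / π * |x| := by
        apply mul_le_mul_of_nonneg_left h1; positivity
    _ ≤ Real.sin |x| := j

lemma two_sin_mul_sin (a b : ℝ) :
    2 * Real.sin a * Real.sin b = Real.cos (a - b) - Real.cos (a + b) := by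
  rw [Real.cos_sub, Real.cos_add]; ring

set_option maxHeartbeats 1600000 in
/-- Off-diagonal decay: if `t ∈ [0,π]` with `|t − θ_k| > δ` and `δ > π/(2n)`,
then `|S_{k,n}(t)| ≤ (π³/(4n²))·(4n²/(2nδ − π)²)`, which is `O(1/n²)` for
fixed `δ`. -/
theorem abs_S_far (n k : ℕ) (hn : 1 ≤ n) (hk1 : 1 ≤ k) (hkn : k ≤ n)
    (δ : ℝ) (hδ : π / (2 * n) < δ) (t : ℝ) (ht : t ∈ Set.Icc 0 π)
    (hfar : δ < |t - cheb n k|) :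
    |S n k t| ≤ π ^ 3 / (4 * (n:ℝ) ^ 2) * (4 * (n:ℝ) ^ 2 / (2 * n * δ - π) ^ 2) := by
  have hπ := Real.pi_pos
  have hn0 : (0:ℝ) < n := by exact_mod_cast Nat.pos_of_ne_zero (by omega)
  obtain ⟨ht0, htπ⟩ := ht
  set h : ℝ := π / (2 * (n:ℝ)) with hhdef
  set θ : ℝ := cheb n k with hθdef
  clear_value h θ
  have hh0 : 0 < h := by rw [hhdef]; positivity
  have hk1' : (1:ℝ) ≤ k := by exact_mod_cast hk1
  have hkn' : (k:ℝ) ≤ n := by exact_mod_cast hkn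
  have hπeq : π = 2 * (n:ℝ) * h := by rw [hhdef]; field_simp
  have hθeq : θ = (2 * (k:ℝ) - 1) * h := by rw [hθdef, cheb, hhdef]; ring
  have hθ1 : h ≤ θ := by rw [hθeq]; nlinarith
  have hθ2 : θ ≤ π - h := by rw [hθeq, hπeq]; nlinarith
  have hδh : h < δ := hδ
  have habs : |t - θ| ≤ π - h := by
    rw [abs_sub_le_iff]; constructor <;> linarith
  have habs' : δ < |t - θ| := hfar
  have hd0 : 0 < δ - h := by linarith
  have hcase : δ < t - θ ∨ δ < -(t - θ) := lt_abs.mp habs'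
  have hu1pos : 0 < (t - h + θ) / 2 := by rcases hcase with hc | hc <;> linarith
  have hu2lt : (t + h + θ) / 2 < π := by rcases hcase with hc | hc <;> linarith
  have hsu1 : 0 < Real.sin ((t - h + θ) / 2) :=
    Real.sin_pos_of_pos_of_lt_pi hu1pos (by linarith)
  have hsu2 : 0 < Real.sin ((t + h + θ) / 2) :=
    Real.sin_pos_of_pos_of_lt_pi (by linarith) hu2lt
  have hv1 : (δ - h) / 2 ≤ |(t - h - θ) / 2| ∧ |(t - h - θ) / 2| ≤ π / 2 := by
    rcases hcase with hc | hc
    · rw [abs_of_pos (by linarith)]; constructor <;> linarith [abs_sub_le_iff.mp habs]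
    · rw [abs_of_neg (by linarith)]; constructor <;> linarith [abs_sub_le_iff.mp habs]
  have hv2 : (δ - h) / 2 ≤ |(t + h - θ) / 2| ∧ |(t + h - θ) / 2| ≤ π / 2 := by
    rcases hcase with hc | hc
    · rw [abs_of_pos (by linarith)]; constructor <;> linarith [abs_sub_le_iff.mp habs]
    · rw [abs_of_neg (by linarith)]; constructor <;> linarith [abs_sub_le_iff.mp habs]
  have hsv1 : (δ - h) / π ≤ |Real.sin ((t - h - θ) / 2)| := by
    calc (δ - h) / π = 2 / π * ((δ - h) / 2) := by ring
      _ ≤ _ := abs_sin_lower _ _ (by linarith) hv1.1 hv1.2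
  have hsv2 : (δ - h) / π ≤ |Real.sin ((t + h - θ) / 2)| := by
    calc (δ - h) / π = 2 / π * ((δ - h) / 2) := by ring
      _ ≤ _ := abs_sin_lower _ _ (by linarith) hv2.1 hv2.2
  have hdp : 0 < (δ - h) / π := div_pos hd0 hπ
  have hsv1ne : Real.sin ((t - h - θ) / 2) ≠ 0 := by
    intro e; rw [e, abs_zero] at hsv1; linarith
  have hsv2ne : Real.sin ((t + h - θ) / 2) ≠ 0 := by
    intro e; rw [e, abs_zero] at hsv2; linarith
  have eD1 : Real.cos (t - h) - Real.cos θ =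
      -2 * Real.sin ((t - h + θ) / 2) * Real.sin ((t - h - θ) / 2) :=
    Real.cos_sub_cos _ _
  have eD2 : Real.cos (t + h) - Real.cos θ =
      -2 * Real.sin ((t + h + θ) / 2) * Real.sin ((t + h - θ) / 2) :=
    Real.cos_sub_cos _ _
  have hD1ne : Real.cos (t - h) - Real.cos θ ≠ 0 := by
    rw [eD1]; exact mul_ne_zero (mul_ne_zero (by norm_num) hsu1.ne') hsv1ne
  have hD2ne : Real.cos (t + h) - Real.cos θ ≠ 0 := by
    rw [eD2]; exact mul_ne_zero (mul_ne_zero (by norm_num) hsu2.ne') hsv2ne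
  have hcosne1 : Real.cos (t - h) ≠ Real.cos θ := sub_ne_zero.mp hD1ne
  have hcosne2 : Real.cos (t + h) ≠ Real.cos θ := sub_ne_zero.mp hD2ne
  have hnh : (n:ℝ) * h = π / 2 := by rw [hhdef]; field_simp
  have hc1 : Real.cos ((n:ℝ) * (t - h)) = Real.sin ((n:ℝ) * t) := by
    rw [show (n:ℝ) * (t - h) = -(π / 2 - (n:ℝ) * t) by rw [mul_sub, hnh]; ring,
      Real.cos_neg, Real.cos_pi_div_two_sub]
  have hc2 : Real.cos ((n:ℝ) * (t + h)) = -Real.sin ((n:ℝ) * t) := by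
    rw [show (n:ℝ) * (t + h) = (n:ℝ) * t + π / 2 by rw [mul_add, hnh],
      Real.cos_add_pi_div_two]
  have hP1 : P n k (t - h) = (-1:ℝ) ^ (k + 1) * Real.sin ((n:ℝ) * t) * Real.sin θ / (n:ℝ) *
      (1 / (Real.cos (t - h) - Real.cos θ)) := by
    simp only [P]; rw [← hθdef, if_neg hcosne1, hc1, div_mul_div_comm, mul_one]
  have hP2 : P n k (t + h) = -((-1:ℝ) ^ (k + 1) * Real.sin ((n:ℝ) * t) * Real.sin θ / (n:ℝ) *
      (1 / (Real.cos (t + h) - Real.cos θ))) := by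
    simp only [P]
    rw [← hθdef, if_neg hcosne2, hc2, div_mul_div_comm, mul_one,
      show (-1:ℝ) ^ (k + 1) * -Real.sin ((n:ℝ) * t) * Real.sin θ =
        -((-1:ℝ) ^ (k + 1) * Real.sin ((n:ℝ) * t) * Real.sin θ) by ring, neg_div]
  have hSval : S n k t = (P n k (t - h) + P n k (t + h)) / 2 := by
    simp only [S]; rw [← hhdef]
  have hsub' : Real.cos (t + h) - Real.cos θ - (Real.cos (t - h) - Real.cos θ) =
      -2 * Real.sin t * Real.sin h := by
    have e := Real.cos_sub_cos (t + h) (t - h)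
    rw [show (t + h + (t - h)) / 2 = t by ring, show (t + h - (t - h)) / 2 = h by ring] at e
    linarith
  have hfrac : 1 / (Real.cos (t - h) - Real.cos θ) - 1 / (Real.cos (t + h) - Real.cos θ) =
      -2 * Real.sin t * Real.sin h /
        ((Real.cos (t - h) - Real.cos θ) * (Real.cos (t + h) - Real.cos θ)) := by
    rw [div_sub_div _ _ hD1ne hD2ne, one_mul, mul_one, hsub']
  have hS2 : S n k t = (-1:ℝ) ^ (k + 1) * Real.sin ((n:ℝ) * t) * Real.sin θ *
      (-2 * Real.sin t * Real.sin h) /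
      (2 * (n:ℝ) * ((Real.cos (t - h) - Real.cos θ) * (Real.cos (t + h) - Real.cos θ))) := by
    have step : (-1:ℝ) ^ (k + 1) * Real.sin ((n:ℝ) * t) * Real.sin θ / (n:ℝ) *
        (1 / (Real.cos (t - h) - Real.cos θ)) +
        -((-1:ℝ) ^ (k + 1) * Real.sin ((n:ℝ) * t) * Real.sin θ / (n:ℝ) *
        (1 / (Real.cos (t + h) - Real.cos θ))) =
        (-1:ℝ) ^ (k + 1) * Real.sin ((n:ℝ) * t) * Real.sin θ / (n:ℝ) *
        (1 / (Real.cos (t - h) - Real.cos θ) - 1 / (Real.cos (t + h) - Real.cos θ)) := by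
      ring
    rw [hSval, hP1, hP2, step, hfrac, div_mul_div_comm, div_div]
    rw [div_eq_div_iff (by positivity) (by
      exact mul_ne_zero (by positivity) (mul_ne_zero hD1ne hD2ne))]
    ring
  have c1 : Real.cos (θ - t) ≤ Real.cos h := by
    have e := Real.cos_le_cos_of_nonneg_of_le_pi hh0.le
      (show |t - θ| ≤ π by linarith) (by linarith)
    rw [Real.cos_abs] at e
    rw [show θ - t = -(t - θ) by ring, Real.cos_neg]; exact e
  have c2 : Real.cos (t + θ) ≤ Real.cos h := by
    rcases le_or_gt (t + θ) π with hle | hgt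
    · exact Real.cos_le_cos_of_nonneg_of_le_pi hh0.le hle (by linarith)
    · rw [← Real.cos_two_pi_sub (t + θ)]
      exact Real.cos_le_cos_of_nonneg_of_le_pi hh0.le (by linarith) (by linarith)
  have hprod : Real.sin θ * Real.sin t ≤
      2 * Real.sin ((t - h + θ) / 2) * Real.sin ((t + h + θ) / 2) := by
    have e1 := two_sin_mul_sin ((t - h + θ) / 2) ((t + h + θ) / 2)
    rw [show (t - h + θ) / 2 - (t + h + θ) / 2 = -h by ring,
        show (t - h + θ) / 2 + (t + h + θ) / 2 = t + θ by ring, Real.cos_neg] at e1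
    have e2 := two_sin_mul_sin θ t
    rw [show θ + t = t + θ by ring] at e2
    linarith [e1, e2, c1, c2]
  have eabs1 : |Real.cos (t - h) - Real.cos θ| =
      2 * Real.sin ((t - h + θ) / 2) * |Real.sin ((t - h - θ) / 2)| := by
    rw [eD1, abs_mul, abs_mul, abs_of_pos hsu1, show |(-2:ℝ)| = 2 by norm_num]
  have eabs2 : |Real.cos (t + h) - Real.cos θ| =
      2 * Real.sin ((t + h + θ) / 2) * |Real.sin ((t + h - θ) / 2)| := by
    rw [eD2, abs_mul, abs_mul, abs_of_pos hsu2, show |(-2:ℝ)| = 2 by norm_num]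
  have hE1 : 2 * Real.sin ((t - h + θ) / 2) * ((δ - h) / π) ≤
      |Real.cos (t - h) - Real.cos θ| := by
    rw [eabs1]
    exact mul_le_mul_of_nonneg_left hsv1 (by linarith [hsu1])
  have hE2 : 2 * Real.sin ((t + h + θ) / 2) * ((δ - h) / π) ≤
      |Real.cos (t + h) - Real.cos θ| := by
    rw [eabs2]
    exact mul_le_mul_of_nonneg_left hsv2 (by linarith [hsu2])
  have hsθ0 : 0 ≤ Real.sin θ :=
    Real.sin_nonneg_of_nonneg_of_le_pi (by linarith) (by linarith)
  have hst0 : 0 ≤ Real.sin t := Real.sin_nonneg_of_nonneg_of_le_pi ht0 htπ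
  have hE : 2 * (δ - h) ^ 2 * (Real.sin θ * Real.sin t) ≤
      π ^ 2 * (|Real.cos (t - h) - Real.cos θ| * |Real.cos (t + h) - Real.cos θ|) := by
    calc 2 * (δ - h) ^ 2 * (Real.sin θ * Real.sin t)
        ≤ (δ - h) ^ 2 * (2 * (2 * Real.sin ((t - h + θ) / 2) * Real.sin ((t + h + θ) / 2))) := by
          linarith [mul_le_mul_of_nonneg_left hprod (show (0:ℝ) ≤ 2 * (δ - h) ^ 2 by positivity)]
      _ = π ^ 2 * ((2 * Real.sin ((t - h + θ) / 2) * ((δ - h) / π)) *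
          (2 * Real.sin ((t + h + θ) / 2) * ((δ - h) / π))) := by
          field_simp
      _ ≤ π ^ 2 * (|Real.cos (t - h) - Real.cos θ| * |Real.cos (t + h) - Real.cos θ|) := by
          refine mul_le_mul_of_nonneg_left ?_ (by positivity)
          exact mul_le_mul hE1 hE2
            (mul_nonneg (mul_nonneg (by norm_num) hsu2.le) hdp.le) (abs_nonneg _)
  have hsθ : |Real.sin θ| = Real.sin θ := abs_of_nonneg hsθ0
  have hst : |Real.sin t| = Real.sin t := abs_of_nonneg hst0
  have hsh0 : 0 ≤ Real.sin h :=
    Real.sin_nonneg_of_nonneg_of_le_pi hh0.le (by linarith)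
  have hsh : |Real.sin h| = Real.sin h := abs_of_nonneg hsh0
  have hone : |(-1:ℝ) ^ (k + 1)| = 1 := by
    rw [abs_pow, abs_neg, abs_one, one_pow]
  have hsntle : |Real.sin ((n:ℝ) * t)| ≤ 1 :=
    abs_le.mpr ⟨Real.neg_one_le_sin _, Real.sin_le_one _⟩
  have hshle : Real.sin h ≤ h := Real.sin_le hh0.le
  have hnumeq : |(-1:ℝ) ^ (k + 1) * Real.sin ((n:ℝ) * t) * Real.sin θ *
      (-2 * Real.sin t * Real.sin h)| =
      |Real.sin ((n:ℝ) * t)| * Real.sin θ * (2 * Real.sin t * Real.sin h) := by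
    rw [abs_mul, abs_mul, abs_mul, abs_mul, abs_mul, hone, hsθ, hst, hsh,
      show |(-2:ℝ)| = 2 by norm_num]
    ring
  have hnum_le : |(-1:ℝ) ^ (k + 1) * Real.sin ((n:ℝ) * t) * Real.sin θ *
      (-2 * Real.sin t * Real.sin h)| ≤ 2 * h * (Real.sin θ * Real.sin t) := by
    rw [hnumeq]
    calc |Real.sin ((n:ℝ) * t)| * Real.sin θ * (2 * Real.sin t * Real.sin h)
        ≤ 1 * Real.sin θ * (2 * Real.sin t * Real.sin h) := by
          refine mul_le_mul_of_nonneg_right (mul_le_mul_of_nonneg_right hsntle hsθ0) ?_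
          linarith [mul_nonneg hst0 hsh0]
      _ = 2 * Real.sin θ * Real.sin t * Real.sin h := by ring
      _ ≤ 2 * Real.sin θ * Real.sin t * h := by
          refine mul_le_mul_of_nonneg_left hshle ?_
          linarith [mul_nonneg hsθ0 hst0]
      _ = 2 * h * (Real.sin θ * Real.sin t) := by ring
  have hdenne : 2 * (n:ℝ) * ((Real.cos (t - h) - Real.cos θ) *
      (Real.cos (t + h) - Real.cos θ)) ≠ 0 :=
    mul_ne_zero (by positivity) (mul_ne_zero hD1ne hD2ne)
  have hdenabs : |2 * (n:ℝ) * ((Real.cos (t - h) - Real.cos θ) *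
      (Real.cos (t + h) - Real.cos θ))| =
      2 * (n:ℝ) * (|Real.cos (t - h) - Real.cos θ| * |Real.cos (t + h) - Real.cos θ|) := by
    rw [abs_mul, abs_mul, abs_mul, Nat.abs_cast, abs_two]
  have hpos2nδ : 0 < 2 * (n:ℝ) * δ - π := by
    rw [hπeq]; linarith [mul_pos hn0 hd0]
  have hne2nδ : 2 * (n:ℝ) * δ - π ≠ 0 := hpos2nδ.ne'
  calc |S n k t| ≤ π ^ 3 / (4 * (n:ℝ) ^ 2 * (δ - h) ^ 2) := by
        rw [hS2, abs_div, div_le_iff₀ (abs_pos.mpr hdenne), hdenabs]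
        refine le_trans hnum_le ?_
        rw [div_mul_eq_mul_div, le_div_iff₀ (by positivity)]
        calc 2 * h * (Real.sin θ * Real.sin t) * (4 * (n:ℝ) ^ 2 * (δ - h) ^ 2)
            = 2 * (n:ℝ) * π * (2 * (δ - h) ^ 2 * (Real.sin θ * Real.sin t)) := by
              rw [hπeq]; ring
          _ ≤ 2 * (n:ℝ) * π * (π ^ 2 * (|Real.cos (t - h) - Real.cos θ| *
              |Real.cos (t + h) - Real.cos θ|)) :=
              mul_le_mul_of_nonneg_left hE (by positivity)
          _ = π ^ 3 * (2 * (n:ℝ) * (|Real.cos (t - h) - Real.cos θ| *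
              |Real.cos (t + h) - Real.cos θ|)) := by ring
    _ = π ^ 3 / (4 * (n:ℝ) ^ 2) * (4 * (n:ℝ) ^ 2 / (2 * n * δ - π) ^ 2) := by
        rw [div_mul_div_comm, div_eq_div_iff
          (mul_ne_zero (by positivity) (pow_ne_zero 2 hd0.ne'))
          (mul_ne_zero (by positivity) (pow_ne_zero 2 hne2nδ))]
        rw [hπeq]; ring
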